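/- arXiv:1803.06334 — 2 statements merged into one kernel-verified Lean document; each statement's English description precedes it below -/
import Mathlib

section
/- For every integer k ≥ 3 and every real ε > 0, there exists N such that for every integer m ≥ N, setting n = (k−1)^m, one has θ_k(n) ≥ ((k−1)!)^{(1/(k−2) − ε)·n}. -/
/-- The value sequence of a permutation `σ` of `Fin n` avoids `k`-term arithmetic
progressions. -/
def AvoidsAP (k : ℕ) {n : ℕ} (σ : Equiv.Perm (Fin n)) : Prop :=
  ¬ ∃ (i : ℕ → Fin n) (d : ℤ), d ≠ 0 ∧ (∀ a b, a < b → b < k → i a < i b) ∧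
    ∀ j, j + 1 < k → ((σ (i (j + 1)) : ℕ) : ℤ) = ((σ (i j) : ℕ) : ℤ) + d

/-- `θ_k(n)`: the number of permutations of `{1, …, n}` avoiding `k`-term
arithmetic progressions. -/
noncomputable def theta (k n : ℕ) : ℕ :=
  Nat.card {σ : Equiv.Perm (Fin n) // AvoidsAP k σ}

/-!
With `q = k - 1`, a permutation of `q * n` is assembled from a permutation `π` of `Fin q` and
`q` AP-free permutations `τ_b` of `Fin n`: the block `b` of `n` consecutive positions takes the
values `≡ π b (mod q)`, in the pattern of `τ_b`. A `k`-term progression whose difference is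
divisible by `q` stays in one residue class, hence in one block, where it is a progression of
`τ_b`; otherwise consecutive terms change residue class, hence move to strictly later blocks,
of which there are only `q < k`. So `θ_k(q n) ≥ q! θ_k(n)^q`, and iterating from `θ_k(1) = 1` gives
`θ_k(q^m) ≥ (q!)^{(q^m - 1)/(q - 1)}`.
-/

open Finset

section BlockPerm

variable {q n : ℕ}

/-- Position `r + n b` (offset `r` in block `b`) is sent to the value `π b + q τ_b(r)`. -/
def blockPerm (π : Equiv.Perm (Fin q)) (τ : Fin q → Equiv.Perm (Fin n)) :
    Equiv.Perm (Fin (q * n)) :=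
  (finProdFinEquiv.symm.trans (Equiv.prodShear π τ)).trans
    ((Equiv.prodComm _ _).trans (finProdFinEquiv.trans (finCongr (mul_comm n q))))

lemma blockPerm_apply_val (π : Equiv.Perm (Fin q)) (τ : Fin q → Equiv.Perm (Fin n))
    (p : Fin (q * n)) : (blockPerm π τ p : ℕ) = π p.divNat + q * τ p.divNat p.modNat := by
  simp [blockPerm, finProdFinEquiv_symm_apply]

lemma blockPerm_inj (hn : 0 < n) {π π' : Equiv.Perm (Fin q)}
    {τ τ' : Fin q → Equiv.Perm (Fin n)} : blockPerm π τ = blockPerm π' τ' ↔ π = π' ∧ τ = τ' := by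
  refine ⟨fun h => ?_, fun ⟨hπ, hτ⟩ => hπ ▸ hτ ▸ rfl⟩
  have hval (b : Fin q) (r : Fin n) : τ b r = τ' b r ∧ π b = π' b := by
    simpa [blockPerm] using congrArg (fun σ : Equiv.Perm (Fin (q * n)) =>
      finProdFinEquiv.symm (finCongr (mul_comm q n) (σ (finProdFinEquiv (b, r))))) h
  exact ⟨Equiv.ext fun b => (hval b ⟨0, hn⟩).2, funext fun b => Equiv.ext fun r => (hval b r).1⟩

lemma Fin.divNat_le_divNat {p p' : Fin (q * n)} (h : p ≤ p') : p.divNat ≤ p'.divNat := by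
  rw [Fin.le_def, Fin.coe_divNat, Fin.coe_divNat]
  exact Nat.div_le_div_right h

lemma Fin.modNat_lt_modNat {p p' : Fin (q * n)} (h : p < p') (hb : p.divNat = p'.divNat) :
    p.modNat < p'.modNat := by
  have hdiv : (p : ℕ) / n = p' / n := by simpa [Fin.ext_iff, Fin.coe_divNat] using hb
  rw [Fin.lt_def, Fin.coe_modNat, Fin.coe_modNat]
  rw [Fin.lt_def, ← Nat.mod_add_div p n, ← Nat.mod_add_div p' n, hdiv] at h
  omega

variable {π : Equiv.Perm (Fin q)} {τ : Fin q → Equiv.Perm (Fin n)} {p p' : Fin (q * n)}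

lemma blockPerm_step_of_dvd {e : ℤ}
    (h : ((blockPerm π τ p' : ℕ) : ℤ) = (blockPerm π τ p : ℕ) + q * e) :
    p'.divNat = p.divNat ∧
      ((τ p.divNat p'.modNat : ℕ) : ℤ) = (τ p.divNat p.modNat : ℕ) + e := by
  rw [blockPerm_apply_val, blockPerm_apply_val] at h
  push_cast at h
  have hres : π p'.divNat = π p.divNat := by
    have hmod := congrArg (· % (q : ℤ)) h
    simp only [add_assoc, ← mul_add, Int.add_mul_emod_self_left] at hmod
    rw [Int.emod_eq_of_lt (by positivity) (by exact_mod_cast (π _).isLt),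
      Int.emod_eq_of_lt (by positivity) (by exact_mod_cast (π _).isLt)] at hmod
    exact Fin.ext (by exact_mod_cast hmod)
  have hq : (q : ℤ) ≠ 0 := by exact_mod_cast p.divNat.pos.ne'
  refine ⟨π.injective hres, mul_left_cancel₀ hq ?_⟩
  rw [hres, π.injective hres] at h
  linarith

lemma blockPerm_divNat_ne_of_not_dvd {d : ℤ} (hd : ¬ (q : ℤ) ∣ d)
    (h : ((blockPerm π τ p' : ℕ) : ℤ) = (blockPerm π τ p : ℕ) + d) :
    p'.divNat ≠ p.divNat := by
  intro hb
  rw [blockPerm_apply_val, blockPerm_apply_val, hb] at h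
  push_cast at h
  exact hd ⟨(τ p.divNat p'.modNat : ℤ) - τ p.divNat p.modNat, by linarith⟩

theorem avoidsAP_blockPerm {k : ℕ} (hqk : q < k) (π : Equiv.Perm (Fin q))
    (hτ : ∀ b, AvoidsAP k (τ b)) : AvoidsAP k (blockPerm π τ) := by
  rintro ⟨i, d, hd, hmono, hstep⟩
  by_cases hdvd : (q : ℤ) ∣ d
  · obtain ⟨e, rfl⟩ := hdvd
    have hblock (j : ℕ) (hj : j + 1 < k) := blockPerm_step_of_dvd (hstep j hj)
    have hconst : ∀ j < k, (i j).divNat = (i 0).divNat := by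
      intro j
      induction j with
      | zero => intro _; rfl
      | succ j ih => intro hj; rw [(hblock j hj).1, ih (by omega)]
    refine hτ (i 0).divNat ⟨fun j => (i j).modNat, e, right_ne_zero_of_mul hd,
      fun a b hab hbk => ?_, fun j hj => ?_⟩
    · exact Fin.modNat_lt_modNat (hmono a b hab hbk)
        ((hconst a (by omega)).trans (hconst b hbk).symm)
    · simpa only [hconst j (by omega)] using (hblock j hj).2
  · have hlt (j : ℕ) (hj : j + 1 < k) : (i j).divNat < (i (j + 1)).divNat :=
      lt_of_le_of_ne (Fin.divNat_le_divNat (hmono j (j + 1) (by omega) hj).le)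
        (blockPerm_divNat_ne_of_not_dvd hdvd (hstep j hj)).symm
    have hgrow : ∀ j < k, j ≤ ((i j).divNat : ℕ) := by
      intro j
      induction j with
      | zero => intro _; exact Nat.zero_le _
      | succ j ih =>
        intro hj
        have := Fin.lt_def.mp (hlt j hj)
        have := ih (by omega)
        omega
    have := hgrow (k - 1) (by omega)
    have := (i (k - 1)).divNat.isLt
    omega

end BlockPerm

lemma one_le_theta_one {k : ℕ} (hk : 2 ≤ k) : 1 ≤ theta k 1 := by
  have hid : AvoidsAP k (1 : Equiv.Perm (Fin 1)) := by
    rintro ⟨i, -, -, hmono, -⟩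
    exact (hmono 0 1 one_pos hk).ne (Subsingleton.elim _ _)
  have : Nonempty {σ : Equiv.Perm (Fin 1) // AvoidsAP k σ} := ⟨⟨1, hid⟩⟩
  exact Nat.card_pos

theorem factorial_mul_theta_pow_le_theta_mul {k q n : ℕ} (hqk : q < k) (hn : 0 < n) :
    q.factorial * theta k n ^ q ≤ theta k (q * n) := by
  let F : Equiv.Perm (Fin q) × (Fin q → {σ : Equiv.Perm (Fin n) // AvoidsAP k σ}) →
      {σ : Equiv.Perm (Fin (q * n)) // AvoidsAP k σ} :=
    fun x => ⟨blockPerm x.1 fun b => x.2 b, avoidsAP_blockPerm hqk x.1 fun b => (x.2 b).2⟩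
  have hF : F.Injective := by
    rintro ⟨π, τ⟩ ⟨π', τ'⟩ h
    have hblock : blockPerm π (fun b => (τ b).1) = blockPerm π' fun b => (τ' b).1 :=
      congrArg Subtype.val h
    obtain ⟨hπ, hτ⟩ := (blockPerm_inj hn).mp hblock
    exact Prod.ext hπ (funext fun b => Subtype.ext (congrFun hτ b))
  simpa [theta, Nat.card_prod, Nat.card_pi, Fintype.card_perm] using
    Nat.card_le_card_of_injective F hF

theorem factorial_pow_geomSum_le_theta_pow {k q : ℕ} (hq : 0 < q) (hqk : q < k) (m : ℕ) :
    q.factorial ^ (∑ i ∈ range m, q ^ i) ≤ theta k (q ^ m) := by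
  induction m with
  | zero => simpa using one_le_theta_one (by omega)
  | succ m ih =>
    calc q.factorial ^ (∑ i ∈ range (m + 1), q ^ i)
        = q.factorial * (q.factorial ^ (∑ i ∈ range m, q ^ i)) ^ q := by
          rw [geom_sum_succ, pow_add, pow_one, pow_mul', mul_comm]
      _ ≤ q.factorial * theta k (q ^ m) ^ q := by gcongr
      _ ≤ theta k (q * q ^ m) := factorial_mul_theta_pow_le_theta_mul hqk (by positivity)
      _ = theta k (q ^ (m + 1)) := by rw [pow_succ']

lemma inv_sub_mul_pow_le_geom_sum {x ε : ℝ} (hx : 2 ≤ x) (hε : 0 < ε) {m : ℕ}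
    (hm : 1 / ε ≤ x ^ m) : (1 / (x - 1) - ε) * x ^ m ≤ ∑ i ∈ range m, x ^ i := by
  have hx1 : 0 < x - 1 := by linarith
  have hεm : 1 ≤ ε * x ^ m := by rwa [div_le_iff₀' hε] at hm
  rw [geom_sum_eq (by linarith), sub_mul, le_div_iff₀ hx1, sub_mul, one_div_mul_eq_div,
    div_mul_cancel₀ _ hx1.ne']
  nlinarith

/-- For every `k ≥ 3` and `ε > 0`, if `n = (k−1)^m` is a sufficiently large power of
`k − 1`, then `θ_k(n) ≥ ((k−1)!)^{(1/(k−2) − ε) n}`. -/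
theorem theta_lower_bound (k : ℕ) (hk : 3 ≤ k) (ε : ℝ) (hε : 0 < ε) :
    ∃ N : ℕ, ∀ m : ℕ, N ≤ m →
      Real.rpow ((k - 1).factorial : ℝ)
          ((1 / ((k : ℝ) - 2) - ε) * (((k - 1) ^ m : ℕ) : ℝ)) ≤
        (theta k ((k - 1) ^ m) : ℝ) := by
  set q := k - 1 with hq
  have hq2 : (2 : ℝ) ≤ q := by exact_mod_cast (by omega : 2 ≤ q)
  refine ⟨⌈1 / ε⌉₊, fun m hm => ?_⟩
  have hqm : 1 / ε ≤ (q : ℝ) ^ m :=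
    calc 1 / ε ≤ m := Nat.ceil_le.mp hm
      _ ≤ 2 ^ m := by exact_mod_cast Nat.lt_two_pow_self.le
      _ ≤ (q : ℝ) ^ m := by gcongr
  have hexp : (1 / ((k : ℝ) - 2) - ε) * ((q ^ m : ℕ) : ℝ) ≤ ((∑ i ∈ range m, q ^ i : ℕ) : ℝ) := by
    have hk2 : (k : ℝ) - 2 = q - 1 := by rw [hq, Nat.cast_sub (by omega)]; ring
    push_cast
    rw [hk2]
    exact inv_sub_mul_pow_le_geom_sum hq2 hε hqm
  calc Real.rpow (q.factorial : ℝ) ((1 / ((k : ℝ) - 2) - ε) * ((q ^ m : ℕ) : ℝ))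
      ≤ (q.factorial : ℝ) ^ ((∑ i ∈ range m, q ^ i : ℕ) : ℝ) :=
        Real.rpow_le_rpow_of_exponent_le (by exact_mod_cast q.factorial_pos) hexp
    _ = ((q.factorial ^ (∑ i ∈ range m, q ^ i) : ℕ) : ℝ) := by
        rw [Real.rpow_natCast]; push_cast; rfl
    _ ≤ theta k (q ^ m) := by exact_mod_cast factorial_pow_geomSum_le_theta_pow (by omega) (by omega) m
end

section
/- For all odd positive integers r and s and every real ε > 0, there exist a set S of positive integers and a bijection f : ℕ → S such that f avoids (r, s) 3-progressions, the lower density of S is at least rs/(r+s)² − ε, and the upper density of S is at least s/(r+s) − ε. -/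
/-!
The set `S` is a union of blocks `(X k, Y k]`: `X (k + 1)` is the least `x` with
`(r + s) Y k < r x`, and the block after it has width `⌈s (X (k + 1) + 1 - Y k) / r⌉`. The
sequence lists the blocks in order, each block in bit-reversed (van der Corput) order. For an
`(r, s)` progression `u₁, u₂, u₃` we have `r (u₃ - u₂) = s (u₂ - u₁)`, and
* `u₃` cannot lie in a later block than `u₂ ∈ (X k, Y k]`, since
  `r u₃ = (r + s) u₂ - s u₁ ≤ (r + s) Y k < r X (k + 1)`;
* `u₁` alone cannot lie in an earlier block, since then `s (u₂ - u₁)` is at least `s` times the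
  gap, while `r (u₃ - u₂)` is less than that by the choice of the width;
* the three cannot share a block: `r` and `s` being odd, `u₂ - u₁ = r d` and `u₃ - u₂ = s d` are
  odd multiples of the same `2 ^ v`, so bit `v` alternates along `u₁, u₂, u₃`, and the
  bit-reversed order cannot increase at both steps.
The width makes the density at each `Y k` at least `s / (r + s)`; the density is smallest at the
block starts, where `X (k + 1) ≈ (r + s) Y k / r` brings it down to `rs / (r + s) ^ 2`.
-/

theorem Int.exists_eq_two_pow_mul_odd {d : ℤ} (hd : d ≠ 0) :
    ∃ (v : ℕ) (t : ℤ), Odd t ∧ d = 2 ^ v * t := by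
  obtain ⟨v, t, ht, hdt⟩ := Nat.exists_eq_two_pow_mul_odd (Int.natAbs_ne_zero.2 hd)
  rcases Int.natAbs_eq d with h | h
  · exact ⟨v, t, ht.natCast, by rw [h, hdt]; push_cast; ring⟩
  · exact ⟨v, -t, (ht.natCast : Odd (t : ℤ)).neg, by rw [h, hdt]; push_cast; ring⟩

theorem Set.Infinite.exists_enumeration_strictMono_comp {α : Type*} {S : Set α} {κ : α → ℕ}
    (hS : S.Infinite) (hκ : S.InjOn κ) :
    ∃ f : ℕ → α, Function.Injective f ∧ Set.range f = S ∧ StrictMono (κ ∘ f) := by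
  have : Nonempty α := hS.nonempty.to_subtype.map Subtype.val
  have hT : (Set.ofPred (· ∈ κ '' S)).Infinite := hS.image hκ
  set e := Nat.nth (· ∈ κ '' S)
  have hκf : ∀ n, κ (Function.invFunOn κ S (e n)) = e n := fun n =>
    Function.invFunOn_eq (Nat.nth_mem_of_infinite hT n)
  have hmono : StrictMono (κ ∘ Function.invFunOn κ S ∘ e) := by
    simpa only [StrictMono, Function.comp_apply, hκf] using Nat.nth_strictMono hT
  refine ⟨Function.invFunOn κ S ∘ e, hmono.injective.of_comp, ?_, hmono⟩
  apply Set.Subset.antisymm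
  · rintro _ ⟨n, rfl⟩
    exact Function.invFunOn_mem (Nat.nth_mem_of_infinite hT n)
  · intro u hu
    obtain ⟨n, hn⟩ : κ u ∈ Set.range e := by
      rw [Nat.range_nth_of_infinite hT]; exact ⟨u, hu, rfl⟩
    refine ⟨n, hκ (Function.invFunOn_mem ⟨u, hu, hn.symm⟩) hu ?_⟩
    rw [hκf, hn]

namespace RSProgression

open Filter

noncomputable def counting (S : Set ℕ) (n : ℕ) : ℕ := (S ∩ Set.Icc 1 n).ncard

theorem counting_le (S : Set ℕ) (n : ℕ) : counting S n ≤ n :=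
  (Set.ncard_le_ncard Set.inter_subset_right (Set.finite_Icc 1 n)).trans
    (by rw [Set.ncard_Icc_nat]; omega)

theorem counting_add (S : Set ℕ) {a b : ℕ} (hab : a ≤ b) :
    counting S b = counting S a + (S ∩ Set.Ioc a b).ncard := by
  have hIcc : ∀ n : ℕ, Set.Icc 1 n = Set.Ioc 0 n := fun n => by ext; simp; omega
  rw [counting, counting, hIcc, hIcc, ← Set.Ioc_union_Ioc_eq_Ioc (Nat.zero_le a) hab,
    Set.inter_union_distrib_left, Set.ncard_union_eq]
  exact (Set.Ioc_disjoint_Ioc_of_le le_rfl).mono Set.inter_subset_right Set.inter_subset_right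

theorem counting_add_of_Ioc_subset {S : Set ℕ} {a b : ℕ} (hab : a ≤ b)
    (h : Set.Ioc a b ⊆ S) : counting S b = counting S a + (b - a) := by
  rw [counting_add S hab, Set.inter_eq_right.2 h, Set.ncard_Ioc_nat]

theorem counting_eq_of_disjoint {S : Set ℕ} {a b : ℕ} (hab : a ≤ b)
    (h : Disjoint S (Set.Ioc a b)) : counting S b = counting S a := by
  rw [counting_add S hab, h.inter_eq, Set.ncard_empty, add_zero]

theorem isBoundedUnder_counting_div (S : Set ℕ) :
    IsBoundedUnder (· ≤ ·) atTop fun n : ℕ => (counting S n : ℝ) / n :=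
  isBoundedUnder_of ⟨1, fun n => div_le_one_of_le₀ (by exact_mod_cast counting_le S n)
    n.cast_nonneg⟩

theorem le_liminf_counting_div {S : Set ℕ} {a b : ℝ} (hb : 0 < b)
    (h : ∀ n : ℕ, a * n ≤ b * counting S n) :
    a / b ≤ liminf (fun n : ℕ => (counting S n : ℝ) / n) atTop := by
  refine le_liminf_of_le (isBoundedUnder_counting_div S).isCoboundedUnder_ge ?_
  filter_upwards [eventually_gt_atTop 0] with n hn
  rw [div_le_div_iff₀ hb (Nat.cast_pos.2 hn)]
  linarith [h n]

theorem le_limsup_counting_div {S : Set ℕ} {a b : ℝ} (hb : 0 < b) {m : ℕ → ℕ}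
    (hm : Tendsto m atTop atTop) (hm₀ : ∀ k, 0 < m k)
    (h : ∀ k, a * m k ≤ b * counting S (m k)) :
    a / b ≤ limsup (fun n : ℕ => (counting S n : ℝ) / n) atTop := by
  refine le_limsup_of_frequently_le (hm.frequently (Frequently.of_forall fun k => ?_))
    (isBoundedUnder_counting_div S)
  rw [div_le_div_iff₀ hb (Nat.cast_pos.2 (hm₀ k))]
  linarith [h k]

/-- `rev m u` reverses the lowest `m` binary digits of `u`. -/
def rev : ℕ → ℕ → ℕ
  | 0, _ => 0
  | m + 1, u => u % 2 * 2 ^ m + rev m (u / 2)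

theorem rev_lt (m u : ℕ) : rev m u < 2 ^ m := by
  induction m generalizing u with
  | zero => simp [rev]
  | succ m ih =>
    have := ih (u / 2)
    rcases Nat.mod_two_eq_zero_or_one u with h | h <;> simp only [rev, h, pow_succ] <;> omega

theorem rev_injOn (m : ℕ) : Set.InjOn (rev m) (Set.Iio (2 ^ m)) := by
  induction m with
  | zero => intro u hu w hw _; simp_all
  | succ m ih =>
    intro u hu w hw h
    simp only [Set.mem_Iio, pow_succ] at hu hw
    have hu' := rev_lt m (u / 2)
    have hw' := rev_lt m (w / 2)
    have hbit : u % 2 = w % 2 := by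
      simp only [rev] at h
      rcases Nat.mod_two_eq_zero_or_one u with h1 | h1 <;>
      rcases Nat.mod_two_eq_zero_or_one w with h2 | h2 <;> simp only [h1, h2] at h ⊢ <;> omega
    have hhalf : u / 2 = w / 2 :=
      ih (show u / 2 < 2 ^ m by omega) (show w / 2 < 2 ^ m by omega)
        (by simpa only [rev, hbit, Nat.add_left_cancel_iff] using h)
    omega

theorem rev_lt_rev {m v u w : ℕ} (hu : u < 2 ^ m) (hlow : u % 2 ^ v = w % 2 ^ v)
    (hu1 : u / 2 ^ v % 2 = 1) (hw0 : w / 2 ^ v % 2 = 0) : rev m w < rev m u := by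
  induction v generalizing m u w with
  | zero =>
    cases m with
    | zero => simp at hu; simp [hu] at hu1
    | succ m =>
      simp only [pow_zero, Nat.div_one] at hu1 hw0
      have := rev_lt m (w / 2)
      simp only [rev, hu1, hw0]
      omega
  | succ v ih =>
    cases m with
    | zero => simp at hu; simp [hu] at hu1
    | succ m =>
      have hbit : u % 2 = w % 2 := by
        rw [← Nat.mod_mod_of_dvd u (dvd_pow_self 2 v.succ_ne_zero), hlow,
          Nat.mod_mod_of_dvd w (dvd_pow_self 2 v.succ_ne_zero)]
      have hhigh := ih (m := m) (u := u / 2) (w := w / 2) (by rw [pow_succ] at hu; omega)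
        (by rw [← Nat.mod_mul_right_div_self, ← Nat.mod_mul_right_div_self, ← pow_succ', hlow])
        (by rwa [Nat.div_div_eq_div_mul, ← pow_succ'])
        (by rwa [Nat.div_div_eq_div_mul, ← pow_succ'])
      simp only [rev, hbit]
      omega

theorem mod_two_pow_eq_and_bit_flip_of_odd_step {u w v : ℕ} {t : ℤ} (ht : Odd t)
    (h : (w : ℤ) = u + 2 ^ v * t) :
    u % 2 ^ v = w % 2 ^ v ∧ (u / 2 ^ v % 2 = 0 ↔ w / 2 ^ v % 2 = 1) := by
  have hpow : (2 : ℤ) ^ v ≠ 0 := by positivity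
  have hmod : (w : ℤ) % 2 ^ v = u % 2 ^ v := by rw [h, Int.add_mul_emod_self_left]
  have hdiv : (w : ℤ) / 2 ^ v = u / 2 ^ v + t := by rw [h, Int.add_mul_ediv_left _ _ hpow]
  obtain ⟨c, rfl⟩ := ht
  constructor
  · exact_mod_cast hmod.symm
  · have : ((w / 2 ^ v : ℕ) : ℤ) = (u / 2 ^ v : ℕ) + (2 * c + 1) := by push_cast; exact hdiv
    omega

theorem not_rev_lt_rev_lt_of_odd_steps {m v u₁ u₂ u₃ : ℕ} {t₁ t₂ : ℤ} (hu₁ : u₁ < 2 ^ m)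
    (hu₂ : u₂ < 2 ^ m) (ht₁ : Odd t₁) (ht₂ : Odd t₂) (h₁₂ : (u₂ : ℤ) = u₁ + 2 ^ v * t₁)
    (h₂₃ : (u₃ : ℤ) = u₂ + 2 ^ v * t₂) : ¬ (rev m u₁ < rev m u₂ ∧ rev m u₂ < rev m u₃) := by
  rintro ⟨h₁, h₂⟩
  obtain ⟨low₁₂, flip₁₂⟩ := mod_two_pow_eq_and_bit_flip_of_odd_step ht₁ h₁₂
  obtain ⟨low₂₃, flip₂₃⟩ := mod_two_pow_eq_and_bit_flip_of_odd_step ht₂ h₂₃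
  rcases Nat.mod_two_eq_zero_or_one (u₁ / 2 ^ v) with b₁ | b₁
  · have b₂ := flip₁₂.1 b₁
    have b₃ : u₃ / 2 ^ v % 2 = 0 := by omega
    exact (rev_lt_rev hu₂ low₂₃ b₂ b₃).not_gt h₂
  · have b₂ : u₂ / 2 ^ v % 2 = 0 := by omega
    exact (rev_lt_rev hu₁ low₁₂ b₁ b₂).not_gt h₁

theorem mul_sub_ne_of_gap {r s x y u₁ u₂ u₃ : ℕ} (hxy : (r + s) * y < r * x) (h₂ : u₂ ≤ y)
    (h₃ : x < u₃) : (r : ℤ) * (u₃ - u₂) ≠ s * (u₂ - u₁) := by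
  intro h
  have hxy' : ((r : ℤ) + s) * y < r * x := by exact_mod_cast hxy
  have h₂' : (u₂ : ℤ) ≤ y := by exact_mod_cast h₂
  have h₃' : (x : ℤ) < u₃ := by exact_mod_cast h₃
  nlinarith [Int.natCast_nonneg r, Int.natCast_nonneg s, Int.natCast_nonneg u₁]

theorem mul_sub_ne_of_short_block {r s x y z u₁ u₂ u₃ : ℕ}
    (hz : r * z + s * y < s * (x + 1) + r * x + r) (h₁ : u₁ ≤ y) (h₂ : x < u₂) (h₃ : u₃ ≤ z) :
    (r : ℤ) * (u₃ - u₂) ≠ s * (u₂ - u₁) := by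
  intro h
  have hz' : (r : ℤ) * z + s * y < s * (x + 1) + r * x + r := by exact_mod_cast hz
  have h₁' : (u₁ : ℤ) ≤ y := by exact_mod_cast h₁
  have h₂' : (x : ℤ) + 1 ≤ u₂ := by exact_mod_cast h₂
  have h₃' : (u₃ : ℤ) ≤ z := by exact_mod_cast h₃
  nlinarith [Int.natCast_nonneg r, Int.natCast_nonneg s]

variable (r s : ℕ)

-- `(g + r - 1) / r` is `⌈g / r⌉`.
def blockEnd : ℕ → ℕ
  | 0 => 1
  | k + 1 =>
    let x := (r + s) * blockEnd k / r + 1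
    x + (s * (x + 1 - blockEnd k) + r - 1) / r

def blockStart : ℕ → ℕ
  | 0 => 0
  | k + 1 => (r + s) * blockEnd r s k / r + 1

def rsSet : Set ℕ := ⋃ k, Set.Ioc (blockStart r s k) (blockEnd r s k)

def blockIndex (u : ℕ) : ℕ := Nat.findGreatest (fun k => blockStart r s k < u) u

/-- Orders `rsSet r s` block by block, and each block `k` by `rev (blockEnd r s k)`. -/
def key (u : ℕ) : ℕ :=
  2 ^ blockEnd r s (blockIndex r s u) + rev (blockEnd r s (blockIndex r s u)) u

variable {r s}

theorem mul_blockStart_succ_mem_Ioc (hr : 0 < r) (k : ℕ) :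
    r * blockStart r s (k + 1) ∈
      Set.Ioc ((r + s) * blockEnd r s k) ((r + s) * blockEnd r s k + r) := by
  have := Nat.div_add_mod ((r + s) * blockEnd r s k) r
  have := Nat.mod_lt ((r + s) * blockEnd r s k) hr
  simp only [blockStart, mul_add, Set.mem_Ioc]
  omega

theorem blockEnd_lt_blockStart_succ (hr : 0 < r) (k : ℕ) :
    blockEnd r s k < blockStart r s (k + 1) := by
  have := (mul_blockStart_succ_mem_Ioc (s := s) hr k).1
  nlinarith

theorem mul_blockEnd_succ_add_mem_Ico (hr : 0 < r) (hs : 0 < s) (k : ℕ) :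
    r * blockEnd r s (k + 1) + s * blockEnd r s k ∈
      Set.Ico (s * (blockStart r s (k + 1) + 1) + r * blockStart r s (k + 1))
        (s * (blockStart r s (k + 1) + 1) + r * blockStart r s (k + 1) + r) := by
  have hgap := blockEnd_lt_blockStart_succ (s := s) hr k
  set x := blockStart r s (k + 1)
  set y := blockEnd r s k
  have hG : s * (x + 1 - y) + s * y = s * (x + 1) := by rw [← mul_add]; congr 1; omega
  have hpos : 0 < s * (x + 1 - y) := Nat.mul_pos hs (by omega)
  have := Nat.div_add_mod (s * (x + 1 - y) + r - 1) r
  have := Nat.mod_lt (s * (x + 1 - y) + r - 1) hr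
  rw [show blockEnd r s (k + 1) = x + (s * (x + 1 - y) + r - 1) / r from rfl]
  generalize s * (x + 1 - y) = g at *
  simp only [mul_add, mul_one, Set.mem_Ico] at hG ⊢
  omega

theorem blockStart_lt_blockEnd (hr : 0 < r) (hs : 0 < s) (k : ℕ) :
    blockStart r s k < blockEnd r s k := by
  cases k with
  | zero => simp [blockStart, blockEnd]
  | succ k =>
    have := (mul_blockEnd_succ_add_mem_Ico hr hs k).1
    have := blockEnd_lt_blockStart_succ (s := s) hr k
    exact Nat.lt_of_mul_lt_mul_left (a := r) (by nlinarith)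

theorem strictMono_blockEnd (hr : 0 < r) (hs : 0 < s) : StrictMono (blockEnd r s) :=
  strictMono_nat_of_lt_succ fun k =>
    (blockEnd_lt_blockStart_succ hr k).trans (blockStart_lt_blockEnd hr hs (k + 1))

theorem strictMono_blockStart (hr : 0 < r) (hs : 0 < s) : StrictMono (blockStart r s) :=
  strictMono_nat_of_lt_succ fun k =>
    (blockStart_lt_blockEnd hr hs k).trans (blockEnd_lt_blockStart_succ hr k)

theorem blockEnd_lt_blockStart (hr : 0 < r) (hs : 0 < s) {k l : ℕ} (hkl : k < l) :
    blockEnd r s k < blockStart r s l := by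
  obtain ⟨l, rfl⟩ := Nat.exists_eq_add_of_lt hkl
  calc blockEnd r s k ≤ blockEnd r s (k + l) := (strictMono_blockEnd hr hs).monotone (by omega)
    _ < blockStart r s (k + l + 1) := blockEnd_lt_blockStart_succ hr _

theorem mem_rsSet {u : ℕ} :
    u ∈ rsSet r s ↔ ∃ k, blockStart r s k < u ∧ u ≤ blockEnd r s k := by
  simp [rsSet]

theorem pos_of_mem_rsSet {u : ℕ} (hu : u ∈ rsSet r s) : 0 < u := by
  obtain ⟨k, hk, -⟩ := mem_rsSet.1 hu
  exact (Nat.zero_le _).trans_lt hk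

theorem infinite_rsSet (hr : 0 < r) (hs : 0 < s) : (rsSet r s).Infinite :=
  Set.infinite_of_forall_exists_gt fun a =>
    ⟨blockEnd r s (a + 1), mem_rsSet.2 ⟨a + 1, blockStart_lt_blockEnd hr hs _, le_rfl⟩,
      Nat.lt_of_lt_of_le (Nat.lt_succ_self a) (strictMono_blockEnd hr hs).le_apply⟩

theorem blockIndex_eq (hr : 0 < r) (hs : 0 < s) {k u : ℕ} (h₁ : blockStart r s k < u)
    (h₂ : u ≤ blockEnd r s k) : blockIndex r s u = k := by
  refine Nat.findGreatest_eq_iff.2 ⟨?_, fun _ => h₁, fun l hkl _ => ?_⟩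
  · exact (strictMono_blockStart hr hs).le_apply.trans h₁.le
  · exact (h₂.trans (blockEnd_lt_blockStart hr hs hkl).le).not_gt

theorem le_of_two_pow_add_rev_le {a b u w : ℕ} (h : 2 ^ a + rev a u ≤ 2 ^ b + rev b w) :
    a ≤ b := by
  have := rev_lt b w
  have : 2 ^ a < 2 ^ (b + 1) := by rw [pow_succ]; omega
  exact Nat.lt_succ_iff.1 ((Nat.pow_lt_pow_iff_right (by norm_num)).1 this)

theorem key_lt_key (hr : 0 < r) (hs : 0 < s) {k l u w : ℕ} (hu : blockStart r s k < u)
    (hu' : u ≤ blockEnd r s k) (hw : blockStart r s l < w) (hw' : w ≤ blockEnd r s l)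
    (h : key r s u < key r s w) :
    k ≤ l ∧ (k = l → rev (blockEnd r s k) u < rev (blockEnd r s k) w) := by
  rw [key, key, blockIndex_eq hr hs hu hu', blockIndex_eq hr hs hw hw'] at h
  refine ⟨(strictMono_blockEnd hr hs).le_iff_le.1 (le_of_two_pow_add_rev_le h.le), ?_⟩
  rintro rfl
  exact Nat.lt_of_add_lt_add_left h

theorem injOn_key (hr : 0 < r) (hs : 0 < s) : (rsSet r s).InjOn (key r s) := by
  intro u hu w hw h
  obtain ⟨k, hu, hu'⟩ := mem_rsSet.1 hu
  obtain ⟨l, hw, hw'⟩ := mem_rsSet.1 hw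
  rw [key, key, blockIndex_eq hr hs hu hu', blockIndex_eq hr hs hw hw'] at h
  obtain rfl : k = l := (strictMono_blockEnd hr hs).injective
    ((le_of_two_pow_add_rev_le h.le).antisymm (le_of_two_pow_add_rev_le h.ge))
  exact rev_injOn _ (hu'.trans_lt Nat.lt_two_pow_self) (hw'.trans_lt Nat.lt_two_pow_self)
    (Nat.add_left_cancel h)

theorem not_rs_progression_of_key_lt (hr : 0 < r) (hs : 0 < s) (hrodd : Odd r) (hsodd : Odd s)
    {u₁ u₂ u₃ : ℕ} (hu₁ : u₁ ∈ rsSet r s) (hu₂ : u₂ ∈ rsSet r s) (hu₃ : u₃ ∈ rsSet r s)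
    (h₁₂ : key r s u₁ < key r s u₂) (h₂₃ : key r s u₂ < key r s u₃) {d : ℤ} (hd : d ≠ 0)
    (e₂ : (u₂ : ℤ) = u₁ + r * d) (e₃ : (u₃ : ℤ) = u₂ + s * d) : False := by
  obtain ⟨k₁, hu₁, hu₁'⟩ := mem_rsSet.1 hu₁
  obtain ⟨k₂, hu₂, hu₂'⟩ := mem_rsSet.1 hu₂
  obtain ⟨k₃, hu₃, hu₃'⟩ := mem_rsSet.1 hu₃
  obtain ⟨hk₁₂, rev₁₂⟩ := key_lt_key hr hs hu₁ hu₁' hu₂ hu₂' h₁₂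
  obtain ⟨hk₂₃, rev₂₃⟩ := key_lt_key hr hs hu₂ hu₂' hu₃ hu₃' h₂₃
  have hrel : (r : ℤ) * (u₃ - u₂) = s * (u₂ - u₁) := by rw [e₃, e₂]; ring
  rcases hk₂₃.lt_or_eq with hk₂₃ | rfl
  · refine mul_sub_ne_of_gap (mul_blockStart_succ_mem_Ioc hr k₂).1 hu₂' ?_ hrel
    exact ((strictMono_blockStart hr hs).monotone hk₂₃).trans_lt hu₃
  rcases hk₁₂.lt_or_eq with hk₁₂ | rfl
  · obtain ⟨k, rfl⟩ := Nat.exists_eq_add_of_lt hk₁₂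
    refine mul_sub_ne_of_short_block (mul_blockEnd_succ_add_mem_Ico hr hs _).2 ?_ hu₂ hu₃' hrel
    exact hu₁'.trans ((strictMono_blockEnd hr hs).monotone (by omega))
  obtain ⟨v, t, ht, rfl⟩ := Int.exists_eq_two_pow_mul_odd hd
  have hlt : ∀ {u}, u ≤ blockEnd r s k₁ → u < 2 ^ blockEnd r s k₁ :=
    fun h => h.trans_lt Nat.lt_two_pow_self
  exact not_rev_lt_rev_lt_of_odd_steps (hlt hu₁') (hlt hu₂') (hrodd.natCast.mul ht)
    (hsodd.natCast.mul ht) (by rw [e₂]; ring) (by rw [e₃]; ring) ⟨rev₁₂ rfl, rev₂₃ rfl⟩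

theorem Ioc_blockStart_subset_rsSet {k n : ℕ} (hn : n ≤ blockEnd r s k) :
    Set.Ioc (blockStart r s k) n ⊆ rsSet r s :=
  fun _ hu => mem_rsSet.2 ⟨k, hu.1, hu.2.trans hn⟩

theorem disjoint_rsSet_Ioc (hr : 0 < r) (hs : 0 < s) (k : ℕ) :
    Disjoint (rsSet r s) (Set.Ioc (blockEnd r s k) (blockStart r s (k + 1))) := by
  refine Set.disjoint_left.2 fun u hu ⟨h₁, h₂⟩ => ?_
  obtain ⟨l, hl, hl'⟩ := mem_rsSet.1 hu
  rcases le_or_gt l k with hlk | hkl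
  · exact (hl'.trans ((strictMono_blockEnd hr hs).monotone hlk)).not_gt h₁
  · exact (((strictMono_blockStart hr hs).monotone hkl).trans_lt hl).not_ge h₂

theorem counting_blockStart_succ (hr : 0 < r) (hs : 0 < s) (k : ℕ) :
    counting (rsSet r s) (blockStart r s (k + 1)) = counting (rsSet r s) (blockEnd r s k) :=
  counting_eq_of_disjoint (blockEnd_lt_blockStart_succ hr k).le (disjoint_rsSet_Ioc hr hs k)

theorem counting_blockEnd (hr : 0 < r) (hs : 0 < s) (k : ℕ) :
    counting (rsSet r s) (blockEnd r s k) =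
      counting (rsSet r s) (blockStart r s k) + (blockEnd r s k - blockStart r s k) :=
  counting_add_of_Ioc_subset (blockStart_lt_blockEnd hr hs k).le
    (Ioc_blockStart_subset_rsSet le_rfl)

-- The slack `r` pays for the rounding up in `blockStart` (see `le_counting_blockStart`).
theorem le_counting_blockEnd (hr : 0 < r) (hs : 0 < s) (k : ℕ) :
    s * blockEnd r s k + r ≤ (r + s) * counting (rsSet r s) (blockEnd r s k) := by
  induction k with
  | zero =>
    have h0 : counting (rsSet r s) 0 = 0 := Nat.le_zero.1 (counting_le _ 0)
    rw [counting_blockEnd hr hs, blockStart, blockEnd, h0]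
    omega
  | succ k ih =>
    have hw := (mul_blockEnd_succ_add_mem_Ico hr hs k).1
    obtain ⟨w, hw'⟩ := Nat.exists_eq_add_of_le (blockStart_lt_blockEnd hr hs (k + 1)).le
    rw [counting_blockEnd hr hs, counting_blockStart_succ hr hs, hw', Nat.add_sub_cancel_left]
    rw [hw'] at hw
    nlinarith

theorem le_counting_blockStart (hr : 0 < r) (hs : 0 < s) (k : ℕ) :
    r * s * blockStart r s k ≤ (r + s) ^ 2 * counting (rsSet r s) (blockStart r s k) := by
  cases k with
  | zero => simp [blockStart]
  | succ k =>
    have hx := (mul_blockStart_succ_mem_Ioc (s := s) hr k).2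
    have hy := le_counting_blockEnd hr hs k
    rw [counting_blockStart_succ hr hs]
    nlinarith

theorem le_counting (hr : 0 < r) (hs : 0 < s) (n : ℕ) :
    r * s * n ≤ (r + s) ^ 2 * counting (rsSet r s) n := by
  rcases Nat.eq_zero_or_pos n with rfl | hn
  · simp
  obtain ⟨k, hk, hk'⟩ := (strictMono_blockStart hr hs).exists_between_of_tendsto_atTop
    (strictMono_blockStart hr hs).tendsto_atTop (x := n) hn
  rcases le_or_gt n (blockEnd r s k) with hnk | hkn
  · have hc := counting_add_of_Ioc_subset hk.le (Ioc_blockStart_subset_rsSet hnk)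
    have hstart := le_counting_blockStart hr hs k
    have hrs : r * s ≤ (r + s) ^ 2 := by nlinarith
    obtain ⟨m, rfl⟩ := Nat.exists_eq_add_of_le hk.le
    rw [hc, Nat.add_sub_cancel_left, mul_add, mul_add]
    exact Nat.add_le_add hstart (Nat.mul_le_mul_right m hrs)
  · have hc := counting_eq_of_disjoint hk' ((disjoint_rsSet_Ioc hr hs k).mono_right
      (Set.Ioc_subset_Ioc_left hkn.le))
    have hstart := le_counting_blockStart hr hs (k + 1)
    rw [hc] at hstart
    exact (Nat.mul_le_mul_left _ hk').trans hstart

end RSProgression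

open RSProgression

open Filter

/-- For all odd positive integers `r` and `s` and `ε > 0`, there exist a set `S` of
positive integers and a bijection `f : ℕ → S` avoiding `(r, s)` 3-progressions, with
lower density of `S` at least `rs/(r+s)² − ε` and upper density at least
`s/(r+s) − ε`. -/
theorem density_posint_avoid_rs_3prog (r s : ℕ)
    (hrodd : Odd r) (hr : 0 < r) (hsodd : Odd s) (hs : 0 < s) (ε : ℝ) (hε : 0 < ε) :
    ∃ (S : Set ℕ) (f : ℕ → ℕ),
      (∀ m ∈ S, 0 < m) ∧
      Function.Injective f ∧ Set.range f = S ∧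
      (¬ ∃ (i₁ i₂ i₃ : ℕ) (d : ℤ), i₁ < i₂ ∧ i₂ < i₃ ∧ d ≠ 0 ∧
        (f i₂ : ℤ) = (f i₁ : ℤ) + r * d ∧ (f i₃ : ℤ) = (f i₂ : ℤ) + s * d) ∧
      (r : ℝ) * s / ((r : ℝ) + s) ^ 2 - ε ≤
        liminf (fun n : ℕ => ((S ∩ Set.Icc 1 n).ncard : ℝ) / n) atTop ∧
      (s : ℝ) / ((r : ℝ) + s) - ε ≤
        limsup (fun n : ℕ => ((S ∩ Set.Icc 1 n).ncard : ℝ) / n) atTop := by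
  obtain ⟨f, hf, hrange, hkey⟩ :=
    (infinite_rsSet hr hs).exists_enumeration_strictMono_comp (injOn_key hr hs)
  have hmem : ∀ i, f i ∈ rsSet r s := fun i => hrange ▸ Set.mem_range_self i
  refine ⟨rsSet r s, f, fun _ => pos_of_mem_rsSet, hf, hrange, ?_, ?_, ?_⟩
  · rintro ⟨i₁, i₂, i₃, d, h₁₂, h₂₃, hd, e₂, e₃⟩
    exact not_rs_progression_of_key_lt hr hs hrodd hsodd (hmem i₁) (hmem i₂) (hmem i₃)
      (hkey h₁₂) (hkey h₂₃) hd e₂ e₃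
  · refine (sub_le_self _ hε.le).trans (le_liminf_counting_div (by positivity) fun n => ?_)
    exact_mod_cast le_counting hr hs n
  · refine (sub_le_self _ hε.le).trans (le_limsup_counting_div (by positivity)
      (strictMono_blockEnd hr hs).tendsto_atTop (fun k => ?_) fun k => ?_)
    · exact (Nat.zero_le _).trans_lt (blockStart_lt_blockEnd hr hs k)
    · exact_mod_cast (Nat.le_add_right _ _).trans (le_counting_blockEnd hr hs k)
end
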